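/- Let K be the attractor of an IFS of similarities with common factor c ∈ (0,1), equipped with its natural fractal structure. Then N_n(K) = k^n and δ(K, Γ_n) = c^n diam(K), hence the limit defining fractal dimension II, lim_{n→∞} log N_n(K)/(−log δ(K,Γ_n)), exists and equals −log k/log c (assuming diam(K) > 0). -/

import Mathlib

open Metric Set Filter Topology MeasureTheory ENNReal NNReal

noncomputable section

/-- A map is a similarity with factor `c` if it scales all distances exactly by `c`. -/
def IsSimilarity {X : Type*} [MetricSpace X] (f : X → X) (c : ℝ) : Prop :=
  ∀ x y, dist (f x) (f y) = c * dist x y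

/-- Composition `f_{ω₁} ∘ ⋯ ∘ f_{ω_n}` of the maps of an IFS along a word `ω`. -/
def wordComp {X : Type*} {k : ℕ} (f : Fin k → X → X) {n : ℕ} (ω : Fin n → Fin k) : X → X :=
  (List.ofFn fun i => f (ω i)).foldr (· ∘ ·) id

/-- Number of elements of level `Γ_n` of the natural fractal structure (counted with
multiplicity over words) that meet `K`. -/
def levelCount {X : Type*} [MetricSpace X] {k : ℕ} (f : Fin k → X → X) (K : Set X)
    (n : ℕ) : ℕ :=
  Set.ncard {ω : Fin n → Fin k | ((wordComp f ω '' K) ∩ K).Nonempty}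

/-- `δ(K, Γ_n)`: supremum of diameters of the elements of level `Γ_n` meeting `K`. -/
def deltaLevel {X : Type*} [MetricSpace X] {k : ℕ} (f : Fin k → X → X) (K : Set X)
    (n : ℕ) : ℝ :=
  sSup {d : ℝ | ∃ ω : Fin n → Fin k, ((wordComp f ω '' K) ∩ K).Nonempty ∧
    d = Metric.diam (wordComp f ω '' K)}

/-- `N_δ(K)`: the largest number of disjoint closed balls of radius `δ` with centres in `K`. -/
def packingNum {X : Type*} [MetricSpace X] (K : Set X) (δ : ℝ) : ℕ :=
  sSup {m : ℕ | ∃ t : Finset X, t.card = m ∧ ↑t ⊆ K ∧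
    (t : Set X).Pairwise fun x y => Disjoint (Metric.closedBall x δ) (Metric.closedBall y δ)}

/-- The pre-measure `H^s_{n,3}(K)`: infimum over whole levels `m ≥ n` of the sum of the
`s`-th powers of the diameters of all elements of that level (with multiplicity). -/
def H3pre {X : Type*} [MetricSpace X] {k : ℕ} (f : Fin k → X → X) (K : Set X)
    (s : ℝ) (n : ℕ) : ℝ≥0∞ :=
  ⨅ m : {m : ℕ // n ≤ m}, ∑ ω : Fin m.1 → Fin k,
    ENNReal.ofReal (Metric.diam (wordComp f ω '' K)) ^ s

/-- `H^s_3(K)`: the (monotone) limit of `H^s_{n,3}(K)` as `n → ∞`. -/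
def H3 {X : Type*} [MetricSpace X] {k : ℕ} (f : Fin k → X → X) (K : Set X) (s : ℝ) : ℝ≥0∞ :=
  ⨆ n : ℕ, H3pre f K s n

/-- `H^s_4(K)`: limit over `n` of the infimum over finite covers of `K` by elements of
levels `≥ n` of the natural fractal structure. -/
def H4 {X : Type*} [MetricSpace X] {k : ℕ} (f : Fin k → X → X) (K : Set X) (s : ℝ) : ℝ≥0∞ :=
  ⨆ n : ℕ, ⨅ (𝒜 : Set (Set X)) (_ : 𝒜.Finite ∧
      (∀ A ∈ 𝒜, ∃ m, n ≤ m ∧ ∃ ω : Fin m → Fin k, A = wordComp f ω '' K) ∧ K ⊆ ⋃₀ 𝒜),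
    ∑' A : 𝒜, ENNReal.ofReal (Metric.diam (A : Set X)) ^ s

/-- `H^s_5(K)`: limit over `n` of the infimum over countable covers of `K` by elements of
levels `≥ n` of the natural fractal structure. -/
def H5 {X : Type*} [MetricSpace X] {k : ℕ} (f : Fin k → X → X) (K : Set X) (s : ℝ) : ℝ≥0∞ :=
  ⨆ n : ℕ, ⨅ (𝒜 : Set (Set X)) (_ : 𝒜.Countable ∧
      (∀ A ∈ 𝒜, ∃ m, n ≤ m ∧ ∃ ω : Fin m → Fin k, A = wordComp f ω '' K) ∧ K ⊆ ⋃₀ 𝒜),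
    ∑' A : 𝒜, ENNReal.ofReal (Metric.diam (A : Set X)) ^ s

/-- `H^s_6(K)`: limit as `δ → 0` of the infimum over countable covers of `K` by
fractal-structure elements of diameter at most `δ`. -/
def H6 {X : Type*} [MetricSpace X] {k : ℕ} (f : Fin k → X → X) (K : Set X) (s : ℝ) : ℝ≥0∞ :=
  ⨆ (δ : ℝ) (_ : 0 < δ), ⨅ (𝒜 : Set (Set X)) (_ : 𝒜.Countable ∧
      (∀ A ∈ 𝒜, (∃ m, ∃ ω : Fin m → Fin k, A = wordComp f ω '' K) ∧ Metric.diam A ≤ δ) ∧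
      K ⊆ ⋃₀ 𝒜),
    ∑' A : 𝒜, ENNReal.ofReal (Metric.diam (A : Set X)) ^ s

/-- The open set condition for a family of self-maps of `ℝ^d`. -/
def OSC {d k : ℕ} (f : Fin k → EuclideanSpace ℝ (Fin d) → EuclideanSpace ℝ (Fin d)) : Prop :=
  ∃ V : Set (EuclideanSpace ℝ (Fin d)), V.Nonempty ∧ IsOpen V ∧ Bornology.IsBounded V ∧
    (∀ i, f i '' V ⊆ V) ∧ Pairwise fun i j => Disjoint (f i '' V) (f j '' V)

/-! Each word map `f_ω` with `|ω| = n` is a similarity of ratio `c^n` mapping `K` into itself,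
so every piece of level `n` meets `K` and has diameter exactly `c^n diam K`. Hence
`N_n = k^n`, `δ_n = c^n diam K`, and the quotient `n log k / -(n log c + log diam K)` tends to
`-log k / log c`. -/

namespace IsSimilarity

variable {X : Type*} [MetricSpace X] {f g : X → X} {a b : ℝ}

theorem comp (hf : IsSimilarity f a) (hg : IsSimilarity g b) : IsSimilarity (f ∘ g) (a * b) :=
  fun x y => by rw [Function.comp_apply, Function.comp_apply, hf, hg, mul_assoc]

theorem edist_eq (hf : IsSimilarity f a) (ha : 0 ≤ a) (x y : X) :
    edist (f x) (f y) = ENNReal.ofReal a * edist x y := by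
  rw [edist_dist, edist_dist, hf, ENNReal.ofReal_mul ha]

theorem ediam_image (hf : IsSimilarity f a) (ha : 0 ≤ a) (s : Set X) :
    ediam (f '' s) = ENNReal.ofReal a * ediam s := by
  simp only [ediam, iSup_image, hf.edist_eq ha, ENNReal.mul_iSup]

theorem diam_image (hf : IsSimilarity f a) (ha : 0 ≤ a) (s : Set X) :
    diam (f '' s) = a * diam s := by
  rw [diam, diam, hf.ediam_image ha, ENNReal.toReal_mul, ENNReal.toReal_ofReal ha]

end IsSimilarity

section wordComp

variable {X : Type*} {k : ℕ} (f : Fin k → X → X)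

@[simp]
theorem wordComp_zero (ω : Fin 0 → Fin k) : wordComp f ω = id := rfl

theorem wordComp_succ {n : ℕ} (ω : Fin (n + 1) → Fin k) :
    wordComp f ω = f (ω 0) ∘ wordComp f (fun i => ω i.succ) := by
  rw [wordComp, List.ofFn_succ]
  rfl

theorem IsSimilarity.wordComp [MetricSpace X] {c : ℝ} (hf : ∀ i, IsSimilarity (f i) c) {n : ℕ}
    (ω : Fin n → Fin k) : IsSimilarity (wordComp f ω) (c ^ n) := by
  induction n with
  | zero => intro x y; simp
  | succ n ih => rw [wordComp_succ, pow_succ']; exact (hf _).comp (ih _)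

theorem mapsTo_wordComp {K : Set X} (hf : ∀ i, MapsTo (f i) K K) {n : ℕ} (ω : Fin n → Fin k) :
    MapsTo (wordComp f ω) K K := by
  induction n with
  | zero => exact mapsTo_id K
  | succ n ih => rw [wordComp_succ]; exact (hf _).comp (ih _)

theorem wordComp_image_inter_nonempty {K : Set X} (hne : K.Nonempty)
    (hf : ∀ i, MapsTo (f i) K K) {n : ℕ} (ω : Fin n → Fin k) : ((wordComp f ω '' K) ∩ K).Nonempty :=
  let ⟨x, hx⟩ := hne
  ⟨wordComp f ω x, mem_image_of_mem _ hx, mapsTo_wordComp f hf ω hx⟩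

end wordComp

section level

variable {X : Type*} [MetricSpace X] {k : ℕ} {f : Fin k → X → X} {K : Set X}

theorem levelCount_eq_pow (hne : K.Nonempty) (hf : ∀ i, MapsTo (f i) K K) (n : ℕ) :
    levelCount f K n = k ^ n := by
  have hall : {ω : Fin n → Fin k | ((wordComp f ω '' K) ∩ K).Nonempty} = univ :=
    eq_univ_of_forall (wordComp_image_inter_nonempty f hne hf)
  rw [levelCount, hall, ncard_univ, Nat.card_fun, Nat.card_fin, Nat.card_fin]

theorem deltaLevel_eq_pow_mul_diam (hk : 0 < k) (hne : K.Nonempty) (hf : ∀ i, MapsTo (f i) K K)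
    {c : ℝ} (hc : 0 ≤ c) (hsim : ∀ i, IsSimilarity (f i) c) (n : ℕ) :
    deltaLevel f K n = c ^ n * diam K := by
  have hdiam (ω : Fin n → Fin k) : diam (wordComp f ω '' K) = c ^ n * diam K :=
    (IsSimilarity.wordComp f hsim ω).diam_image (pow_nonneg hc n) K
  suffices {d : ℝ | ∃ ω : Fin n → Fin k, ((wordComp f ω '' K) ∩ K).Nonempty ∧
      d = diam (wordComp f ω '' K)} = {c ^ n * diam K} by
    rw [deltaLevel, this, csSup_singleton]
  ext d
  simp only [mem_ofPred_eq, mem_singleton_iff, wordComp_image_inter_nonempty f hne hf, true_and,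
    hdiam]
  exact ⟨fun ⟨_, hd⟩ => hd, fun hd => ⟨fun _ => ⟨0, hk⟩, hd⟩⟩

end level

theorem tendsto_log_pow_div_neg_log_pow_mul {a c D : ℝ} (hc : Real.log c ≠ 0) (hD : D ≠ 0) :
    Tendsto (fun n : ℕ => Real.log (a ^ n) / -Real.log (c ^ n * D)) atTop
      (𝓝 (-Real.log a / Real.log c)) := by
  have hc0 : c ≠ 0 := by rintro rfl; simp at hc
  have hlim : Tendsto (fun n : ℕ => Real.log a / (-Real.log c - Real.log D / n)) atTop
      (𝓝 (Real.log a / (-Real.log c - 0))) :=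
    tendsto_const_nhds.div (tendsto_const_nhds.sub (tendsto_const_div_atTop_nhds_zero_nat _))
      (by rwa [sub_zero, neg_ne_zero])
  rw [sub_zero, div_neg, ← neg_div] at hlim
  refine hlim.congr' ((eventually_ne_atTop 0).mono fun n hn => ?_)
  have hn : (n : ℝ) ≠ 0 := Nat.cast_ne_zero.2 hn
  dsimp only
  rw [Real.log_pow, Real.log_mul (pow_ne_zero n hc0) hD, Real.log_pow, ← mul_div_mul_left (Real.log a) _ hn, mul_comm]
  congr 1
  field_simp
  ring

theorem dim2_formula_general {X : Type*} [MetricSpace X]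
    {k : ℕ} (hk : 0 < k) (f : Fin k → X → X) (c : ℝ) (hc : c ∈ Set.Ioo (0 : ℝ) 1)
    (hf : ∀ i, IsSimilarity (f i) c)
    (K : Set X) (hne : K.Nonempty) (hK : K = ⋃ i, f i '' K)
    (hdiam : 0 < Metric.diam K) :
    (∀ n : ℕ, levelCount f K n = k ^ n) ∧
      (∀ n : ℕ, deltaLevel f K n = c ^ n * Metric.diam K) ∧
      Filter.Tendsto
        (fun n : ℕ => Real.log (levelCount f K n) / (-Real.log (deltaLevel f K n)))
        Filter.atTop (𝓝 (-Real.log k / Real.log c)) := by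
  have hmaps (i : Fin k) : MapsTo (f i) K K :=
    mapsTo_iff_image_subset.2 ((subset_iUnion (fun j => f j '' K) i).trans hK.ge)
  have hcount := levelCount_eq_pow hne hmaps
  have hdelta := deltaLevel_eq_pow_mul_diam hk hne hmaps hc.1.le hf
  refine ⟨hcount, hdelta, ?_⟩
  simp only [hcount, hdelta, Nat.cast_pow]
  exact tendsto_log_pow_div_neg_log_pow_mul
    (Real.log_neg hc.1 hc.2).ne hdiam.ne'

/-- for an attractor of an IFS with common factor `c`, `N_n(K) = k^n`,
`δ(K,Γ_n) = c^n · diam K`, and the fractal dimension II limit exists and equals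
`-log k / log c`. -/
theorem dim2_formula {X : Type*} [MetricSpace X] [CompleteSpace X]
    {k : ℕ} (hk : 0 < k) (f : Fin k → X → X) (c : ℝ) (hc : c ∈ Set.Ioo (0 : ℝ) 1)
    (hf : ∀ i, IsSimilarity (f i) c)
    (K : Set X) (hne : K.Nonempty) (hcpt : IsCompact K) (hK : K = ⋃ i, f i '' K)
    (hdiam : 0 < Metric.diam K) :
    (∀ n : ℕ, levelCount f K n = k ^ n) ∧
      (∀ n : ℕ, deltaLevel f K n = c ^ n * Metric.diam K) ∧
      Filter.Tendsto
        (fun n : ℕ => Real.log (levelCount f K n) / (-Real.log (deltaLevel f K n)))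
        Filter.atTop (𝓝 (-Real.log k / Real.log c)) :=
  dim2_formula_general hk f c hc hf K hne hK hdiam
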